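/- arXiv:math/0509481 — 3 statements merged into one kernel-verified Lean document; each statement's English description precedes it below -/
import Mathlib

section
/- Let N ≥ 2, let A be a Z_N-graded associative unital algebra over C, let q be a primitive N-th root of unity, and let v ∈ A have grading 1 with v^N = α·e for some α ∈ C, where e is the unit. Then the map d_v(w) = vw - q^{|w|} wv satisfies d_v^N(w) = 0 for every homogeneous w ∈ A. -/
/-!
Let `L` and `R` be left and right multiplication by `v`; they commute, and on an element of
grading `k` the map `d_v` acts as `L - q^k R`. Hence `d_v^N w = ∏_{j<N} (L - q^{|w|+j} R) w`, and
since `q^{|w|+j}` runs over all `N`-th roots of unity this product is `L^N - R^N`, which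
annihilates everything because `v^N = α e` is central.
-/

open Finset

theorem IsPrimitiveRoot.prod_range_sub_pow_mul {R : Type*} [CommRing R] [IsDomain R] {ζ : R}
    {n : ℕ} (hζ : IsPrimitiveRoot ζ n) (hpos : 0 < n) (x y : R) :
    ∏ i ∈ range n, (x - ζ ^ i * y) = x ^ n - y ^ n := by
  classical
  rw [hζ.pow_sub_pow_eq_prod_sub_mul x y hpos, Polynomial.nthRootsFinset_def,
    ← Multiset.toFinset_eq hζ.nthRoots_one_nodup, prod_mk (Polynomial.nthRoots n 1),
    hζ.nthRoots_eq (one_pow n), Multiset.map_map, prod_eq_multiset_prod, range_val]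
  simp only [Function.comp_def, mul_one]

theorem IsPrimitiveRoot.prod_range_sub_pow_add_smul {K S : Type*} [CommRing K] [IsDomain K]
    [CommRing S] [Algebra K S] {ζ : K} {n : ℕ} (hζ : IsPrimitiveRoot ζ n) (hpos : 0 < n)
    (c : ℕ) (x y : S) :
    ∏ j ∈ range n, (x - ζ ^ (c + j) • y) = x ^ n - y ^ n := by
  have hC : IsPrimitiveRoot (MvPolynomial.C ζ : MvPolynomial (Fin 2) K) n :=
    hζ.map_of_injective (MvPolynomial.C_injective _ _)
  have key := congrArg (MvPolynomial.aeval ![x, ζ ^ c • y])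
    (hC.prod_range_sub_pow_mul hpos (.X 0) (.X 1))
  have hy : (ζ ^ c • y) ^ n = y ^ n := by
    rw [smul_pow, ← pow_mul, mul_comm, pow_mul, hζ.pow_eq_one, one_pow, one_smul]
  simp only [map_prod, map_sub, map_mul, map_pow, MvPolynomial.aeval_X, MvPolynomial.aeval_C,
    Matrix.cons_val_zero, Matrix.cons_val_one, hy] at key
  rw [← key]
  refine prod_congr rfl fun j _ => ?_
  rw [← map_pow, ← Algebra.smul_def, smul_smul, ← pow_add, add_comm]

open scoped IsMulCommutative in
theorem IsPrimitiveRoot.eq_pow_apply_sub_pow_apply {K M : Type*} [CommRing K] [IsDomain K]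
    [AddCommGroup M] [Module K M] {ζ : K} {n : ℕ} (hζ : IsPrimitiveRoot ζ n) (hpos : 0 < n)
    {x y : Module.End K M} (hxy : Commute x y) (c : ℕ) (D : ℕ → M)
    (hD : ∀ j, D (j + 1) = x (D j) - ζ ^ (c + j) • y (D j)) :
    D n = (x ^ n) (D 0) - (y ^ n) (D 0) := by
  have : IsMulCommutative (Algebra.adjoin K {x, y}) := Algebra.isMulCommutative_adjoin K <| by
    simp only [Set.mem_insert_iff, Set.mem_singleton_iff]
    rintro a (rfl | rfl) b (rfl | rfl) <;> first | rfl | exact hxy.eq | exact hxy.eq.symm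
  let x' : Algebra.adjoin K {x, y} := ⟨x, Algebra.subset_adjoin (by simp)⟩
  let y' : Algebra.adjoin K {x, y} := ⟨y, Algebra.subset_adjoin (by simp)⟩
  have hiter : ∀ m, D m =
      ((∏ j ∈ range m, (x' - ζ ^ (c + j) • y') : Algebra.adjoin K {x, y}) : Module.End K M)
        (D 0) := by
    intro m
    induction m with
    | zero => simp
    | succ m ih =>
      rw [hD, prod_range_succ_comm, Subalgebra.coe_mul, Module.End.mul_apply, ← ih]
      rfl
  rw [hiter, hζ.prod_range_sub_pow_add_smul hpos]
  rfl

theorem stmt6_general {N : ℕ} (hN : 2 ≤ N) {A : Type*} [Ring A] [Algebra ℂ A]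
    (q : ℂ) (hq : IsPrimitiveRoot q N)
    (v : A) (α : ℂ) (hvN : v ^ N = α • (1 : A))
    (i : ZMod N)
    (D : ℕ → A)
    (hDs : ∀ j : ℕ, D (j + 1) = v * D j - q ^ (i.val + j) • (D j * v)) :
    D N = 0 := by
  have hD := hq.eq_pow_apply_sub_pow_apply (by omega) (LinearMap.commute_mulLeft_right v v)
    i.val D (by simpa only [LinearMap.mulLeft_apply, LinearMap.mulRight_apply] using hDs)
  rw [hD, LinearMap.pow_mulLeft, LinearMap.pow_mulRight, LinearMap.mulLeft_apply,
    LinearMap.mulRight_apply, hvN, smul_mul_assoc, mul_smul_comm, one_mul, mul_one, sub_self]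

/-- Theorem 1.1: if `A` is a `ℤ_N`-graded algebra, `q` a primitive `N`-th root of unity,
`v` of grading 1 with `v^N = α • 1`, then `d_v^N w = 0` for every homogeneous `w`.
Here `D j = d_v^j w` is the iterated `q`-differential, `d_v` acting on an element of
grading `i + j` by `u ↦ v u - q^{|u|} u v`. -/
theorem stmt6 {N : ℕ} (hN : 2 ≤ N) {A : Type*} [Ring A] [Algebra ℂ A]
    (𝒜 : ZMod N → Submodule ℂ A) [GradedRing 𝒜]
    (q : ℂ) (hq : IsPrimitiveRoot q N)
    (v : A) (hv : v ∈ 𝒜 1) (α : ℂ) (hvN : v ^ N = α • (1 : A))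
    (i : ZMod N) (w : A) (hw : w ∈ 𝒜 i)
    (D : ℕ → A) (hD0 : D 0 = w)
    (hDs : ∀ j : ℕ, D (j + 1) = v * D j - q ^ (i.val + j) • (D j * v)) :
    D N = 0 :=
  stmt6_general hN q hq v α hvN i D hDs
end

section
/- In the reduced quantum plane, the element v = y has grading 1 and satisfies v^N = 1; consequently, with q a primitive N-th root of unity, the map d(w) = yw - q^{|w|} wy is an N-differential on C_rq, i.e., it satisfies the graded q-Leibniz rule and d^N = 0. -/
/-!
The Leibniz rule is a rearrangement once `q ^ |w w'| = q ^ |w| q ^ |w'|`, which holds because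
`q ^ N = 1`. For `d ^ N = 0`, write `d` on elements of grading `k + j` as `L - q ^ (k + j) R`,
with `L` and `R` the commuting operators of left and right multiplication by `y`. As the `q ^ j`,
`j < N`, run over all `N`-th roots of unity, `∏ j < N, (L - q ^ (k + j) R) = L ^ N - R ^ N`,
and this is zero because `y ^ N = 1`.
-/

open Polynomial

section PrimitiveRoot

variable {R : Type*} [CommRing R] [IsDomain R] {n : ℕ} {ζ : R}

theorem IsPrimitiveRoot.prod_X_sub_C_mul_X (hζ : IsPrimitiveRoot ζ n) (hn : 0 < n) (k : ℕ) :
    ∏ j ∈ Finset.range n, (X - C (C (ζ ^ (k + j)) * X) : R[X][X]) = X ^ n - C (X ^ n) := by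
  have hCζ : IsPrimitiveRoot (C ζ) n := hζ.map_of_injective C_injective
  have hα : (C (ζ ^ k) * X : R[X]) ^ n = X ^ n := by
    rw [mul_pow, ← C_pow, ← pow_mul, mul_comm k, pow_mul, hζ.pow_eq_one, one_pow, C_1, one_mul]
  rw [X_pow_sub_C_eq_prod hCζ hn hα]
  refine Finset.prod_congr rfl fun j _ => ?_
  simp only [pow_add, map_mul, map_pow]
  ring

theorem IsPrimitiveRoot.eq_pow_sub_pow_apply_of_succ_eq {M : Type*} [AddCommGroup M] [Module R M]
    {f g : Module.End R M} (hfg : Commute f g) (hζ : IsPrimitiveRoot ζ n) (hn : 0 < n) (k : ℕ)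
    (D : ℕ → M) (hD : ∀ j, D (j + 1) = f (D j) - ζ ^ (k + j) • g (D j)) :
    D n = (f ^ n - g ^ n) (D 0) := by
  have hcomm (p : R[X]) : Commute (aeval g p) f :=
    (Algebra.commute_of_mem_adjoin_singleton_of_commute
      (by rw [Algebra.adjoin_singleton_eq_range_aeval]; exact ⟨p, rfl⟩) hfg).symm
  let φ : R[X][X] →ₐ[R] Module.End R M := eval₂AlgHom (aeval g) f hcomm
  have hφX : φ X = f := eval₂_X _ _
  have hφC (p : R[X]) : φ (C p) = aeval g p := eval₂_C _ _
  have hφ : ∀ m, D m = φ (∏ j ∈ Finset.range m, (X - C (C (ζ ^ (k + j)) * X))) (D 0) := by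
    intro m
    induction m with
    | zero => simp
    | succ m ih =>
      rw [hD, ih, Finset.prod_range_succ, mul_comm, map_mul, Module.End.mul_apply, map_sub,
        hφX, hφC, map_mul, aeval_C, aeval_X, Algebra.algebraMap_eq_smul_one, smul_one_mul]
      rfl
  rw [hφ, hζ.prod_X_sub_C_mul_X hn, map_sub, map_pow, hφX, hφC, map_pow, aeval_X]

end PrimitiveRoot

theorem pow_zmod_val_add {M : Type*} [Monoid M] {n : ℕ} [NeZero n] {ζ : M} (hζ : ζ ^ n = 1)
    (a b : ZMod n) : ζ ^ (a + b).val = ζ ^ a.val * ζ ^ b.val := by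
  rw [ZMod.val_add, ← pow_eq_pow_mod _ hζ, pow_add]

section TwistedCommutator

variable {R A : Type*} [CommRing R] [Ring A] [Algebra R A]

def twistedComm (c : R) (y w : A) : A :=
  y * w - c • (w * y)

theorem twistedComm_mul (c c' : R) (y w w' : A) :
    twistedComm (c * c') y (w * w') = twistedComm c y w * w' + c • (w * twistedComm c' y w') := by
  simp only [twistedComm, sub_mul, mul_sub, smul_mul_assoc, mul_smul_comm, smul_sub, smul_smul,
    mul_assoc]
  abel

end TwistedCommutator

theorem stmt11_general {A : Type*} [Ring A] [Algebra ℂ A] (N : ℕ) (hN : 2 ≤ N)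
    (q : ℂ) (hq : IsPrimitiveRoot q N) (x y : A)
    (hyN : y ^ N = 1) :
    (y ∈ Submodule.span ℂ {a : A | ∃ l < N, a = y ^ (1 : ZMod N).val * x ^ l}) ∧
    (y ^ N = 1) ∧
    (∀ k k' : ZMod N, ∀ w ∈ Submodule.span ℂ {a : A | ∃ l < N, a = y ^ k.val * x ^ l},
      ∀ w' ∈ Submodule.span ℂ {a : A | ∃ l < N, a = y ^ k'.val * x ^ l},
      y * (w * w') - q ^ (k + k').val • (w * w' * y) =
        (y * w - q ^ k.val • (w * y)) * w' +
          q ^ k.val • (w * (y * w' - q ^ k'.val • (w' * y)))) ∧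
    (∀ k : ZMod N, ∀ w ∈ Submodule.span ℂ {a : A | ∃ l < N, a = y ^ k.val * x ^ l},
      ∀ D : ℕ → A, D 0 = w →
        (∀ j : ℕ, D (j + 1) = y * D j - q ^ (k.val + j) • (D j * y)) → D N = 0) := by
  have : Fact (1 < N) := ⟨hN⟩
  refine ⟨Submodule.subset_span ⟨0, by omega, by simp [ZMod.val_one]⟩,
    hyN, fun k k' w _ w' _ => ?_, fun k _ _ D _ hD => ?_⟩
  · rw [pow_zmod_val_add hq.pow_eq_one]
    exact twistedComm_mul _ _ y w w'
  · rw [hq.eq_pow_sub_pow_apply_of_succ_eq (LinearMap.commute_mulLeft_right y y) (by omega)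
      k.val D hD, LinearMap.pow_mulLeft, LinearMap.pow_mulRight, hyN]
    simp

/-- In the reduced quantum plane, `v = y` has grading 1 and `v^N = 1`; consequently the
map `d(w) = yw - q^{|w|} wy` is an `N`-differential: it satisfies the graded `q`-Leibniz
rule on homogeneous elements, and `d^N = 0` (with `D j = d^j w` the iteration of `d`
starting from a homogeneous `w` of grading `k`). -/
theorem stmt11 {A : Type*} [Ring A] [Algebra ℂ A] (N : ℕ) (hN : 2 ≤ N)
    (q : ℂ) (hq : IsPrimitiveRoot q N) (x y : A)
    (hxy : x * y = q • (y * x)) (hxN : x ^ N = 1) (hyN : y ^ N = 1) :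
    (y ∈ Submodule.span ℂ {a : A | ∃ l < N, a = y ^ (1 : ZMod N).val * x ^ l}) ∧
    (y ^ N = 1) ∧
    (∀ k k' : ZMod N, ∀ w ∈ Submodule.span ℂ {a : A | ∃ l < N, a = y ^ k.val * x ^ l},
      ∀ w' ∈ Submodule.span ℂ {a : A | ∃ l < N, a = y ^ k'.val * x ^ l},
      y * (w * w') - q ^ (k + k').val • (w * w' * y) =
        (y * w - q ^ k.val • (w * y)) * w' +
          q ^ k.val • (w * (y * w' - q ^ k'.val • (w' * y)))) ∧
    (∀ k : ZMod N, ∀ w ∈ Submodule.span ℂ {a : A | ∃ l < N, a = y ^ k.val * x ^ l},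
      ∀ D : ℕ → A, D 0 = w →
        (∀ j : ℕ, D (j + 1) = y * D j - q ^ (k.val + j) • (D j * y)) → D N = 0) :=
  stmt11_general N hN q hq x y hyN
end

section
/- For each k, the subspace C^k_rq of homogeneous elements of grading k in the reduced quantum plane is a free right module of rank 1 over C^0_rq, generated by y^k: every w ∈ C^k_rq can be written uniquely as w = y^k r with r ∈ C^0_rq, and r = y^{N-k} w. -/
/-! Since `y ^ N = 1`, `y ^ k` is a unit with inverse `y ^ (N - k)`, and left multiplication by
`y ^ k` carries the span of the `x ^ l` onto the span of the `y ^ k * x ^ l`. -/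

theorem Submodule.mul_mem_span_of_mem_span_image_mul {R A : Type*} [CommSemiring R] [Semiring A]
    [Algebra R A] {u v w : A} {S : Set A} (hvu : v * u = 1)
    (hw : w ∈ Submodule.span R ((u * ·) '' S)) : v * w ∈ Submodule.span R S := by
  rw [show (u * ·) = LinearMap.mulLeft R u from rfl, Submodule.span_image] at hw
  obtain ⟨s, hs, rfl⟩ := hw
  rwa [LinearMap.mulLeft_apply, ← mul_assoc, hvu, one_mul]

theorem stmt12_general {A : Type*} [Ring A] [Algebra ℂ A] (N : ℕ) (x y : A) (hyN : y ^ N = 1)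
    (k : ℕ) (hk : k < N) (w : A)
    (hw : w ∈ Submodule.span ℂ {a : A | ∃ l < N, a = y ^ k * x ^ l}) :
    (∃! r : A, r ∈ Submodule.span ℂ {a : A | ∃ l < N, a = x ^ l} ∧ w = y ^ k * r) ∧
    (∀ r ∈ Submodule.span ℂ {a : A | ∃ l < N, a = x ^ l},
      w = y ^ k * r → r = y ^ (N - k) * w) := by
  have hinv : y ^ (N - k) * y ^ k = 1 := by rw [pow_sub_mul_pow y hk.le, hyN]
  have hinv' : y ^ k * y ^ (N - k) = 1 := by rw [pow_mul_pow_sub y hk.le, hyN]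
  have hcancel : ∀ r : A, w = y ^ k * r → r = y ^ (N - k) * w := by
    rintro r rfl
    rw [← mul_assoc, hinv, one_mul]
  have himage : {a : A | ∃ l < N, a = y ^ k * x ^ l} =
      (y ^ k * ·) '' {a | ∃ l < N, a = x ^ l} := by
    ext
    simp [eq_comm]
  rw [himage] at hw
  refine ⟨⟨y ^ (N - k) * w, ⟨Submodule.mul_mem_span_of_mem_span_image_mul hinv hw, ?_⟩,
    fun r hr => hcancel r hr.2⟩, fun r _ => hcancel r⟩
  rw [← mul_assoc, hinv', one_mul]

/-- The subspace `ℂᵏ_rq` of homogeneous elements of grading `k` of the reduced quantum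
plane is a free right module of rank 1 over `ℂ⁰_rq`, generated by `y^k`: every `w` of
grading `k` is uniquely `w = y^k r` with `r ∈ ℂ⁰_rq`, and `r = y^{N-k} w`. -/
theorem stmt12 {A : Type*} [Ring A] [Algebra ℂ A] (N : ℕ) (hN : 2 ≤ N)
    (q : ℂ) (hq : IsPrimitiveRoot q N) (x y : A)
    (hxy : x * y = q • (y * x)) (hxN : x ^ N = 1) (hyN : y ^ N = 1)
    (k : ℕ) (hk : k < N) (w : A)
    (hw : w ∈ Submodule.span ℂ {a : A | ∃ l < N, a = y ^ k * x ^ l}) :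
    (∃! r : A, r ∈ Submodule.span ℂ {a : A | ∃ l < N, a = x ^ l} ∧ w = y ^ k * r) ∧
    (∀ r ∈ Submodule.span ℂ {a : A | ∃ l < N, a = x ^ l},
      w = y ^ k * r → r = y ^ (N - k) * w) :=
  stmt12_general N x y hyN k hk w hw
end
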